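/- arXiv:2305.16778 — 5 statements merged into one kernel-verified Lean document; each statement's English description precedes it below -/
import Mathlib

section
/- Let $v_1,\dots,v_n \in \mathbb{R}^3$, $p > 2$, fix $x \ne 0$ with $\sum_i \max(v_i^T x,0)^p > 0$, and set $a_i = \max(v_i^T x, 0)$, $V = [v_1,\dots,v_n]$, $\tilde{a}_p = \sum_i a_i^p$. Define $A = \tilde{a}_p^{1/p - 1}\,\mathrm{diag}(a_i^{p-2}) - \tilde{a}_p^{1/p - 2}\,\hat{a}_{p-1}\hat{a}_{p-1}^T$ where $\hat{a}_{p-1} = (a_1^{p-1},\dots,a_n^{p-1})^T$. Then the matrix $\frac{ds}{dx} = (p-1) V A V^T \in \mathbb{R}^{3\times 3}$ is positive semi-definite. -/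
/-!
Writing `a i ^ (p - 1) * u i = a i ^ (p / 2) * (a i ^ (p / 2 - 1) * u i)`, Cauchy–Schwarz gives
`(∑ aᵢ^(p-1) uᵢ)² ≤ (∑ aᵢ^p) (∑ aᵢ^(p-2) uᵢ²)`, which is exactly the nonnegativity of the quadratic
form of `A`. Congruence `A ↦ V A Vᵀ` and scaling by `p - 1 ≥ 0` preserve semidefiniteness.
-/

open Matrix

variable {ι : Type*} [Fintype ι]

-- Where some `a i = 0`, the splitting of `a i ^ (p - 1)` relies on `0 ^ x = 0` for `x ≠ 0`;
-- for `p = 1` the inequality is false.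
theorem sq_dotProduct_rpow_sub_one_le {p : ℝ} (hp : p ≠ 1) {a : ι → ℝ} (ha : 0 ≤ a)
    (u : ι → ℝ) :
    ((fun i => a i ^ (p - 1)) ⬝ᵥ u) ^ 2 ≤ (∑ i, a i ^ p) * ∑ i, a i ^ (p - 2) * u i ^ 2 := by
  have h_split : ∀ i, a i ^ (p / 2) * (a i ^ (p / 2 - 1) * u i) = a i ^ (p - 1) * u i := by
    intro i
    rw [← mul_assoc, ← Real.rpow_add' (ha i) (by contrapose! hp; linarith)]
    ring_nf
  have h_sq_left : ∀ i, (a i ^ (p / 2)) ^ 2 = a i ^ p := by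
    intro i
    rw [← Real.rpow_natCast, ← Real.rpow_mul (ha i)]
    ring_nf
  have h_sq_right : ∀ i, (a i ^ (p / 2 - 1) * u i) ^ 2 = a i ^ (p - 2) * u i ^ 2 := by
    intro i
    rw [mul_pow, ← Real.rpow_natCast, ← Real.rpow_mul (ha i)]
    ring_nf
  have cs := Finset.sum_mul_sq_le_sq_mul_sq Finset.univ
    (fun i => a i ^ (p / 2)) (fun i => a i ^ (p / 2 - 1) * u i)
  simpa only [dotProduct, h_split, h_sq_left, h_sq_right] using cs

theorem posSemidef_smul_diagonal_sub_vecMulVec [DecidableEq ι] {s : ℝ} {d b : ι → ℝ}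
    (h : ∀ u, (b ⬝ᵥ u) ^ 2 ≤ s * ∑ i, d i * u i ^ 2) :
    (s • diagonal d - vecMulVec b b).PosSemidef := by
  refine PosSemidef.of_dotProduct_mulVec_nonneg ?_ fun u => ?_
  · exact ((isHermitian_diagonal d).smul (IsSelfAdjoint.all s)).sub
      (posSemidef_vecMulVec_self_star b).isHermitian
  · have quadratic_form : star u ⬝ᵥ ((s • diagonal d - vecMulVec b b) *ᵥ u)
        = s * ∑ i, d i * u i ^ 2 - (b ⬝ᵥ u) ^ 2 := by
      simp only [sub_mulVec, smul_mulVec, vecMulVec_mulVec, op_smul_eq_smul, dotProduct_sub,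
        dotProduct_smul, star_trivial, smul_eq_mul, dotProduct_comm u b, sq]
      simp only [dotProduct, mulVec_diagonal]
      congr 2
      exact Finset.sum_congr rfl fun i _ => by ring
    rw [quadratic_form, sub_nonneg]
    exact h u

-- `(p - 1) • normalizedLpHessian p a` is the Hessian of `y ↦ (∑ i, y i ^ p) ^ (1 / p)` at `a ≥ 0`.
noncomputable def normalizedLpHessian [DecidableEq ι] (p : ℝ) (a : ι → ℝ) : Matrix ι ι ℝ :=
  (∑ i, a i ^ p) ^ (1 / p - 1) • diagonal (fun i => a i ^ (p - 2))
    - (∑ i, a i ^ p) ^ (1 / p - 2) • vecMulVec (fun i => a i ^ (p - 1)) (fun i => a i ^ (p - 1))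

theorem normalizedLpHessian_posSemidef [DecidableEq ι] {p : ℝ} (hp : p ≠ 1) {a : ι → ℝ}
    (ha : 0 ≤ a) (hS : 0 < ∑ i, a i ^ p) : (normalizedLpHessian p a).PosSemidef := by
  have h_factor : normalizedLpHessian p a = (∑ i, a i ^ p) ^ (1 / p - 2) •
      ((∑ i, a i ^ p) • diagonal (fun i => a i ^ (p - 2))
        - vecMulVec (fun i => a i ^ (p - 1)) (fun i => a i ^ (p - 1))) := by
    rw [normalizedLpHessian, smul_sub, smul_smul, ← Real.rpow_add_one hS.ne']
    ring_nf
  rw [h_factor]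
  exact (posSemidef_smul_diagonal_sub_vecMulVec (sq_dotProduct_rpow_sub_one_le hp ha)).smul
    (Real.rpow_nonneg hS.le _)

theorem stmt9_general (n : ℕ) (v : Fin n → Fin 3 → ℝ) (p : ℝ) (hp : 2 < p)
    (x : Fin 3 → ℝ)
    (a : Fin n → ℝ) (hadef : ∀ i, a i = max (v i ⬝ᵥ x) 0)
    (hpos : 0 < ∑ i, a i ^ p)
    (V : Matrix (Fin 3) (Fin n) ℝ)
    (A : Matrix (Fin n) (Fin n) ℝ)
    (hA : A = (∑ i, a i ^ p) ^ (1 / p - 1) • Matrix.diagonal (fun i => a i ^ (p - 2))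
        - (∑ i, a i ^ p) ^ (1 / p - 2) •
            Matrix.of (fun i j => a i ^ (p - 1) * a j ^ (p - 1))) :
    ((p - 1) • (V * A * Vᵀ)).PosSemidef := by
  have ha : 0 ≤ a := fun i => hadef i ▸ le_max_right _ _
  have hA_psd : A.PosSemidef := hA ▸ normalizedLpHessian_posSemidef (by linarith) ha hpos
  simpa using (hA_psd.mul_mul_conjTranspose_same V).smul (by linarith : (0 : ℝ) ≤ p - 1)

theorem stmt9 (n : ℕ) (v : Fin n → Fin 3 → ℝ) (p : ℝ) (hp : 2 < p)
    (x : Fin 3 → ℝ) (hx : x ≠ 0)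
    (a : Fin n → ℝ) (hadef : ∀ i, a i = max (v i ⬝ᵥ x) 0)
    (hpos : 0 < ∑ i, a i ^ p)
    (V : Matrix (Fin 3) (Fin n) ℝ) (hV : V = Matrix.of fun r i => v i r)
    (A : Matrix (Fin n) (Fin n) ℝ)
    (hA : A = (∑ i, a i ^ p) ^ (1 / p - 1) • Matrix.diagonal (fun i => a i ^ (p - 2))
        - (∑ i, a i ^ p) ^ (1 / p - 2) •
            Matrix.of (fun i j => a i ^ (p - 1) * a j ^ (p - 1))) :
    ((p - 1) • (V * A * Vᵀ)).PosSemidef :=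
  stmt9_general n v p hp x a hadef hpos V A hA
end

section
/- Under the setting of the previous statement, additionally assume that for every $x \ne 0$ there exist at least 3 linearly independent vertices $v_i$ with $v_i^T x > 0$. Then the Jacobian $\frac{ds}{dx} = (p-1)VAV^T$ has rank exactly 2, and its kernel is spanned by $x$. -/
open Matrix

/-!
Write `S = ∑ aᵢ ^ p` and `wᵢ = aᵢ ^ (p - 2)`, so that `aᵢ ^ (p - 1) = wᵢ aᵢ` and `S = ∑ wᵢ aᵢ²`.
Since `∇h` is homogeneous of degree `0`, `A` kills `a`, and `a = (Vᵀx)⁺` agrees with `Vᵀx`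
wherever `w ≠ 0`, so `x` lies in the kernel. Conversely the quadratic form of `A` at `c = Vᵀu`
is `S ^ (1/p - 2) (S ∑ wᵢ cᵢ² - (∑ wᵢ aᵢ cᵢ)²)`, which vanishes only in the equality case of the
weighted Cauchy–Schwarz inequality: `c = t a` on the support of `w`. Hence `u - t x` is orthogonal
to every vertex `vᵢ` with `vᵢ ⬝ x > 0`; these span the space, so `u = t x`. Rank–nullity gives
the rank.
-/

theorem Finset.exists_eq_mul_of_sq_sum_mul_mul_eq {ι : Type*} (s : Finset ι) {w a c : ι → ℝ}
    (hw : ∀ i ∈ s, 0 ≤ w i) (hS : 0 < ∑ i ∈ s, w i * a i ^ 2)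
    (h : (∑ i ∈ s, w i * a i * c i) ^ 2 = (∑ i ∈ s, w i * a i ^ 2) * ∑ i ∈ s, w i * c i ^ 2) :
    ∃ t : ℝ, ∀ i ∈ s, w i ≠ 0 → c i = t * a i := by
  set S := ∑ i ∈ s, w i * a i ^ 2
  set W := ∑ i ∈ s, w i * a i * c i
  refine ⟨W / S, fun i hi hwi => ?_⟩
  have hexpand : ∑ i ∈ s, w i * (c i - W / S * a i) ^ 2
      = ∑ i ∈ s, w i * c i ^ 2 - 2 * (W / S) * W + (W / S) ^ 2 * S := by
    simp only [S, W, Finset.mul_sum, ← Finset.sum_sub_distrib, ← Finset.sum_add_distrib]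
    exact Finset.sum_congr rfl fun i _ => by ring
  have hsum : ∑ i ∈ s, w i * (c i - W / S * a i) ^ 2 = 0 := by
    rw [hexpand]
    field_simp
    linear_combination -h
  have hterm := (Finset.sum_eq_zero_iff_of_nonneg fun i hi =>
    mul_nonneg (hw i hi) (sq_nonneg (c i - W / S * a i))).1 hsum i hi
  have := pow_eq_zero_iff (n := 2) two_ne_zero |>.1 ((mul_eq_zero.1 hterm).resolve_left hwi)
  linarith

theorem Real.rpow_sub_one_eq_rpow_sub_two_mul {x p : ℝ} (hx : 0 ≤ x) (hp : p ≠ 1) :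
    x ^ (p - 1) = x ^ (p - 2) * x := by
  rw [← Real.rpow_add_one' hx (by contrapose! hp; linarith)]
  ring_nf

theorem Real.rpow_sub_two_mul_self {x : ℝ} (hx : x ≠ 0) (y : ℝ) :
    x ^ (y - 2) * x = x ^ (y - 1) := by
  rw [← Real.rpow_add_one hx]
  ring_nf

theorem Real.rpow_eq_rpow_sub_two_mul_sq {x p : ℝ} (hx : 0 ≤ x) (hp : p ≠ 0) :
    x ^ p = x ^ (p - 2) * x ^ 2 := by
  rw [← Real.rpow_two, ← Real.rpow_add' hx (by simpa using hp)]
  ring_nf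

theorem Real.sum_rpow_sub_two_mul_sq {ι : Type*} [Fintype ι] {p : ℝ} (hp : p ≠ 0) {a : ι → ℝ}
    (ha : 0 ≤ a) :
    ∑ i, a i ^ (p - 2) * a i ^ 2 = ∑ i, a i ^ p :=
  Finset.sum_congr rfl fun i _ => (Real.rpow_eq_rpow_sub_two_mul_sq (p := p) (ha i) hp).symm

theorem Matrix.eq_zero_of_linearIndependent_of_dotProduct_eq_zero {m K : Type*} [Fintype m]
    [DecidableEq m] [Field K] {b : m → m → K} (hb : LinearIndependent K b) {y : m → K}
    (h : ∀ r, b r ⬝ᵥ y = 0) : y = 0 := by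
  have hunit : IsUnit (of b) := Matrix.linearIndependent_rows_iff_isUnit.1 hb
  exact Matrix.mulVec_injective_iff_isUnit.2 hunit (funext h |>.trans (mulVec_zero _).symm)

theorem Matrix.ker_mulVecLin_smul {m n K : Type*} [Fintype n] [Field K] {c : K} (hc : c ≠ 0)
    (M : Matrix m n K) : LinearMap.ker (c • M).mulVecLin = LinearMap.ker M.mulVecLin := by
  have : (c • M).mulVecLin = c • M.mulVecLin := LinearMap.ext fun u => smul_mulVec c M u
  rw [this, LinearMap.ker_smul _ _ hc]

theorem Matrix.rank_add_one_of_ker_eq_span_singleton {m n K : Type*} [Fintype n] [Field K]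
    {M : Matrix m n K} {x : n → K} (hx : x ≠ 0)
    (h : LinearMap.ker M.mulVecLin = Submodule.span K {x}) : M.rank + 1 = Fintype.card n := by
  have := LinearMap.finrank_range_add_finrank_ker M.mulVecLin
  rwa [h, finrank_span_singleton hx, Module.finrank_fintype_fun_eq_card] at this

section LpHessian

variable {ι : Type*} [Fintype ι] [DecidableEq ι]

/-- On the nonnegative orthant, `(p - 1) • lpHessianCore p a` is the Hessian of
`a ↦ (∑ i, a i ^ p) ^ (1 / p)`. -/
noncomputable def lpHessianCore (p : ℝ) (a : ι → ℝ) : Matrix ι ι ℝ :=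
  (∑ i, a i ^ p) ^ (1 / p - 1) • diagonal (fun i => a i ^ (p - 2))
    - (∑ i, a i ^ p) ^ (1 / p - 2) • of (fun i j => a i ^ (p - 1) * a j ^ (p - 1))

theorem lpHessianCore_mulVec {p : ℝ} (hp : p ≠ 1) {a : ι → ℝ} (ha : 0 ≤ a) (c : ι → ℝ) :
    lpHessianCore p a *ᵥ c = fun i =>
      (∑ j, a j ^ p) ^ (1 / p - 1) * (a i ^ (p - 2) * c i)
        - (∑ j, a j ^ p) ^ (1 / p - 2) * (a i ^ (p - 2) * a i)
          * ∑ j, a j ^ (p - 2) * a j * c j := by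
  have hrankOne : of (fun i j => a i ^ (p - 1) * a j ^ (p - 1)) *ᵥ c
      = fun i => a i ^ (p - 2) * a i * ∑ j, a j ^ (p - 2) * a j * c j := by
    funext i
    simp only [mulVec, dotProduct, of_apply, Real.rpow_sub_one_eq_rpow_sub_two_mul (ha _) hp,
      Finset.mul_sum]
    exact Finset.sum_congr rfl fun j _ => by ring
  rw [lpHessianCore, sub_mulVec, smul_mulVec, smul_mulVec, hrankOne]
  funext i
  simp only [Pi.sub_apply, Pi.smul_apply, smul_eq_mul, mulVec_diagonal, mul_assoc]

theorem lpHessianCore_mulVec_congr {p : ℝ} (hp : 2 < p) {a : ι → ℝ} (ha : 0 ≤ a) {c c' : ι → ℝ}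
    (h : ∀ i, a i ≠ 0 → c i = c' i) : lpHessianCore p a *ᵥ c = lpHessianCore p a *ᵥ c' := by
  have hw : ∀ i, a i ^ (p - 2) * c i = a i ^ (p - 2) * c' i := fun i => by
    by_cases hai : a i = 0
    · rw [hai, Real.zero_rpow (by linarith), zero_mul, zero_mul]
    · rw [h i hai]
  have hw' : ∀ i, a i ^ (p - 2) * a i * c i = a i ^ (p - 2) * a i * c' i := fun i => by
    rw [mul_right_comm, hw, mul_right_comm]
  simp only [lpHessianCore_mulVec (by linarith : p ≠ 1) ha, hw, hw']

theorem lpHessianCore_mulVec_self {p : ℝ} (hp : 2 < p) {a : ι → ℝ} (ha : 0 ≤ a)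
    (hS : ∑ i, a i ^ p ≠ 0) : lpHessianCore p a *ᵥ a = 0 := by
  have hS' : ∑ j, a j ^ (p - 2) * a j * a j = ∑ j, a j ^ p := Finset.sum_congr rfl fun j _ => by
    rw [Real.rpow_eq_rpow_sub_two_mul_sq (p := p) (ha j) (by linarith)]; ring
  funext i
  rw [lpHessianCore_mulVec (by linarith) ha, hS', Pi.zero_apply]
  linear_combination (-(a i ^ (p - 2) * a i)) * Real.rpow_sub_two_mul_self hS (1 / p)

theorem dotProduct_lpHessianCore_mulVec {p : ℝ} (hp : 2 < p) {a : ι → ℝ} (ha : 0 ≤ a)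
    (hS : ∑ i, a i ^ p ≠ 0) (c : ι → ℝ) :
    c ⬝ᵥ lpHessianCore p a *ᵥ c = (∑ i, a i ^ p) ^ (1 / p - 2) *
      ((∑ i, a i ^ (p - 2) * a i ^ 2) * (∑ i, a i ^ (p - 2) * c i ^ 2)
        - (∑ i, a i ^ (p - 2) * a i * c i) ^ 2) := by
  rw [lpHessianCore_mulVec (by linarith) ha, Real.sum_rpow_sub_two_mul_sq (by linarith) ha,
    mul_sub, ← mul_assoc, Real.rpow_sub_two_mul_self hS]
  simp only [dotProduct, mul_sub, Finset.sum_sub_distrib]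
  congr 1
  · rw [Finset.mul_sum]
    exact Finset.sum_congr rfl fun i _ => by ring
  · rw [sq, Finset.mul_sum, Finset.mul_sum]
    exact Finset.sum_congr rfl fun i _ => by ring

end LpHessian

section Kernel

variable {m ι : Type*} [Fintype m] [Fintype ι] [DecidableEq ι] (V : Matrix m ι ℝ) {p : ℝ}
  {x : m → ℝ} {a : ι → ℝ}

theorem mul_lpHessianCore_mul_transpose_mulVec_self (hp : 2 < p)
    (ha : ∀ i, a i = max ((Vᵀ *ᵥ x) i) 0) (hS : ∑ i, a i ^ p ≠ 0) :
    (V * lpHessianCore p a * Vᵀ) *ᵥ x = 0 := by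
  have ha0 : 0 ≤ a := fun i => (ha i).symm ▸ le_max_right _ _
  have hcongr : lpHessianCore p a *ᵥ (Vᵀ *ᵥ x) = lpHessianCore p a *ᵥ a :=
    lpHessianCore_mulVec_congr hp ha0 fun i hai => by
      rw [ha i] at hai ⊢
      exact (max_eq_left (not_le.1 fun h => hai (max_eq_right h)).le).symm
  rw [← mulVec_mulVec, ← mulVec_mulVec, hcongr, lpHessianCore_mulVec_self hp ha0 hS, mulVec_zero]

theorem exists_smul_eq_of_mul_lpHessianCore_mul_transpose_mulVec_eq_zero (hp : 2 < p)
    (ha : ∀ i, a i = max ((Vᵀ *ᵥ x) i) 0) (hS : 0 < ∑ i, a i ^ p)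
    (hspan : ∀ y : m → ℝ, (∀ i, 0 < (Vᵀ *ᵥ x) i → (Vᵀ *ᵥ y) i = 0) → y = 0)
    {u : m → ℝ} (hu : (V * lpHessianCore p a * Vᵀ) *ᵥ u = 0) : ∃ t : ℝ, t • x = u := by
  have ha0 : 0 ≤ a := fun i => (ha i).symm ▸ le_max_right _ _
  set c := Vᵀ *ᵥ u
  have hquad : c ⬝ᵥ lpHessianCore p a *ᵥ c = 0 := by
    calc c ⬝ᵥ lpHessianCore p a *ᵥ c = u ⬝ᵥ (V * lpHessianCore p a * Vᵀ) *ᵥ u := by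
          rw [← mulVec_mulVec, ← mulVec_mulVec, dotProduct_mulVec u, ← mulVec_transpose]
      _ = 0 := by rw [hu, dotProduct_zero]
  rw [dotProduct_lpHessianCore_mulVec hp ha0 hS.ne' c] at hquad
  have hCS := (mul_eq_zero.1 hquad).resolve_left (Real.rpow_pos_of_pos hS _).ne'
  obtain ⟨t, ht⟩ := Finset.univ.exists_eq_mul_of_sq_sum_mul_mul_eq (w := fun i => a i ^ (p - 2))
    (c := c) (fun i _ => Real.rpow_nonneg (ha0 i) _)
    (by rwa [Real.sum_rpow_sub_two_mul_sq (by linarith) ha0]) (by linear_combination -hCS)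
  refine ⟨t, (sub_eq_zero.1 (hspan _ fun i hi => ?_)).symm⟩
  have hai : a i = (Vᵀ *ᵥ x) i := by rw [ha i, max_eq_left hi.le]
  have hc := ht i (Finset.mem_univ i) (Real.rpow_pos_of_pos (hai ▸ hi) _).ne'
  rw [mulVec_sub, mulVec_smul, Pi.sub_apply, Pi.smul_apply, smul_eq_mul, ← hai]
  exact sub_eq_zero.2 hc

theorem ker_mul_lpHessianCore_mul_transpose (hp : 2 < p)
    (ha : ∀ i, a i = max ((Vᵀ *ᵥ x) i) 0) (hS : 0 < ∑ i, a i ^ p)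
    (hspan : ∀ y : m → ℝ, (∀ i, 0 < (Vᵀ *ᵥ x) i → (Vᵀ *ᵥ y) i = 0) → y = 0) :
    LinearMap.ker (V * lpHessianCore p a * Vᵀ).mulVecLin = Submodule.span ℝ {x} := by
  ext u
  rw [LinearMap.mem_ker, mulVecLin_apply, Submodule.mem_span_singleton]
  constructor
  · exact exists_smul_eq_of_mul_lpHessianCore_mul_transpose_mulVec_eq_zero V hp ha hS hspan
  · rintro ⟨t, rfl⟩
    rw [mulVec_smul, mul_lpHessianCore_mul_transpose_mulVec_self V hp ha hS.ne', smul_zero]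

end Kernel

theorem stmt10 (n : ℕ) (v : Fin n → Fin 3 → ℝ) (p : ℝ) (hp : 2 < p)
    (x : Fin 3 → ℝ) (hx : x ≠ 0)
    (a : Fin n → ℝ) (hadef : ∀ i, a i = max (v i ⬝ᵥ x) 0)
    (hpos : 0 < ∑ i, a i ^ p)
    (V : Matrix (Fin 3) (Fin n) ℝ) (hV : V = Matrix.of fun r i => v i r)
    (A : Matrix (Fin n) (Fin n) ℝ)
    (hA : A = (∑ i, a i ^ p) ^ (1 / p - 1) • Matrix.diagonal (fun i => a i ^ (p - 2))
        - (∑ i, a i ^ p) ^ (1 / p - 2) •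
            Matrix.of (fun i j => a i ^ (p - 1) * a j ^ (p - 1)))
    (hindep : ∀ y : Fin 3 → ℝ, y ≠ 0 → ∃ s : Fin 3 → Fin n,
        LinearIndependent ℝ (fun r => v (s r)) ∧ ∀ r, 0 < v (s r) ⬝ᵥ y) :
    ((p - 1) • (V * A * Vᵀ)).rank = 2 ∧
    LinearMap.ker ((p - 1) • (V * A * Vᵀ)).mulVecLin = Submodule.span ℝ {x} := by
  obtain rfl : A = lpHessianCore p a := hA
  obtain ⟨s, hli, hs⟩ := hindep x hx
  have hker : LinearMap.ker ((p - 1) • (V * lpHessianCore p a * Vᵀ)).mulVecLin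
      = Submodule.span ℝ {x} := by
    rw [ker_mulVecLin_smul (by linarith),
      ker_mul_lpHessianCore_mul_transpose V hp (by subst hV; exact hadef) hpos]
    subst hV
    exact fun y hy =>
      eq_zero_of_linearIndependent_of_dotProduct_eq_zero hli fun r => hy (s r) (hs r)
  have hrank := rank_add_one_of_ker_eq_span_singleton hx hker
  rw [Fintype.card_fin] at hrank
  exact ⟨by omega, hker⟩
end

section
/- Let $M_i, M_j \in \mathbb{R}^{3\times 3}$ be positive semi-definite matrices of rank 2 whose kernels are both spanned by a unit vector $x \in \mathbb{R}^3$, let $\sigma > 0$, and let $y \in \mathbb{R}^3$ satisfy $x^T y > 0$. Then the $4 \times 4$ matrix $J = \begin{bmatrix} \sigma(M_i + M_j) & y \\ 2x^T & 0 \end{bmatrix}$ is non-singular. -/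
/-!
A kernel vector `(w, t)` of `J` satisfies `A w + t y = 0` and `xᵀ w = 0`, where
`A = σ (Mᵢ + Mⱼ)`. Since `A` is symmetric with `A x = 0`, pairing the first equation with `x`
kills `A w`, leaving `t (xᵀ y) = 0`, so `t = 0`. Then `A w = 0`; for positive semidefinite
summands `ker (Mᵢ + Mⱼ) = ker Mᵢ ∩ ker Mⱼ = span {x}`, so `w` is a multiple of `x`, and
`xᵀ w = 0` forces `w = 0`.
-/

open Matrix

namespace Matrix

section Field

variable {ι K : Type*} [Fintype ι] [Field K]

theorem ker_mulVecLin_smul_s11 (M : Matrix ι ι K) {a : K} (ha : a ≠ 0) :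
    LinearMap.ker (a • M).mulVecLin = LinearMap.ker M.mulVecLin := by
  ext v
  simp only [LinearMap.mem_ker, mulVecLin_apply, smul_mulVec, smul_eq_zero, ha, false_or]

theorem fromBlocks_replicateCol_replicateRow_mulVec_sumElim (A : Matrix ι ι K)
    (y z w : ι → K) (t : K) :
    fromBlocks A (replicateCol (Fin 1) y) (replicateRow (Fin 1) z) 0 *ᵥ Sum.elim w (fun _ => t)
      = Sum.elim (A *ᵥ w + t • y) (fun _ => z ⬝ᵥ w) := by
  ext (i | i) <;> simp [mulVec, dotProduct, mul_comm]

theorem det_fromBlocks_replicateCol_replicateRow_ne_zero [DecidableEq ι] {A : Matrix ι ι K}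
    {x y z : ι → K} (hxA : x ᵥ* A = 0)
    (hker : LinearMap.ker A.mulVecLin = Submodule.span K {x})
    (hxy : x ⬝ᵥ y ≠ 0) (hzx : z ⬝ᵥ x ≠ 0) :
    (fromBlocks A (replicateCol (Fin 1) y) (replicateRow (Fin 1) z) 0).det ≠ 0 := by
  rw [Ne, ← exists_mulVec_eq_zero_iff]
  rintro ⟨v, hv, hJv⟩
  obtain ⟨w, t, rfl⟩ : ∃ (w : ι → K) (t : K), v = Sum.elim w (fun _ => t) :=
    ⟨v ∘ Sum.inl, v (Sum.inr 0), by ext (i | i) <;> simp [Fin.fin_one_eq_zero]⟩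
  rw [fromBlocks_replicateCol_replicateRow_mulVec_sumElim, ← Sum.elim_zero_zero,
    Sum.elim_eq_iff] at hJv
  obtain ⟨hAw, hzw⟩ := hJv
  have ht : t = 0 := by
    have h := congrArg (x ⬝ᵥ ·) hAw
    simp only [dotProduct_add, dotProduct_mulVec, hxA, zero_dotProduct, dotProduct_smul,
      smul_eq_mul, zero_add, dotProduct_zero] at h
    exact (mul_eq_zero.mp h).resolve_right hxy
  subst ht
  rw [zero_smul, add_zero] at hAw
  obtain ⟨c, rfl⟩ : ∃ c : K, c • x = w :=
    Submodule.mem_span_singleton.mp (hker ▸ (hAw : w ∈ LinearMap.ker A.mulVecLin))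
  have hc : c = 0 := by
    have h := congrFun hzw 0
    simp only [dotProduct_smul, smul_eq_mul, Pi.zero_apply] at h
    exact (mul_eq_zero.mp h).resolve_right hzx
  subst hc
  exact hv (by rw [zero_smul, ← Sum.elim_zero_zero]; rfl)

end Field

section PosSemidef

variable {n 𝕜 : Type*} [Fintype n] [RCLike 𝕜]

open scoped ComplexOrder

theorem PosSemidef.ker_mulVecLin_add {A B : Matrix n n 𝕜} (hA : A.PosSemidef)
    (hB : B.PosSemidef) :
    LinearMap.ker (A + B).mulVecLin = LinearMap.ker A.mulVecLin ⊓ LinearMap.ker B.mulVecLin := by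
  refine le_antisymm (fun v hv => ?_) (fun v ⟨hAv, hBv⟩ => ?_)
  · have hAB : star v ⬝ᵥ A *ᵥ v + star v ⬝ᵥ B *ᵥ v = 0 := by
      rw [← dotProduct_add, ← add_mulVec]
      exact (hA.add hB).dotProduct_mulVec_zero_iff v |>.mpr hv
    obtain ⟨hAv, hBv⟩ := (add_eq_zero_iff_of_nonneg (hA.dotProduct_mulVec_nonneg v)
      (hB.dotProduct_mulVec_nonneg v)).mp hAB
    exact ⟨(hA.dotProduct_mulVec_zero_iff v).mp hAv, (hB.dotProduct_mulVec_zero_iff v).mp hBv⟩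
  · simp only [LinearMap.mem_ker, mulVecLin_add, LinearMap.add_apply] at hAv hBv ⊢
    rw [hAv, hBv, add_zero]

end PosSemidef

theorem IsHermitian.star_vecMul_eq_zero {n α : Type*} [Fintype n] [Ring α] [StarRing α]
    {A : Matrix n n α} (hA : A.IsHermitian) {v : n → α} (hv : A *ᵥ v = 0) :
    star v ᵥ* A = 0 := by
  rw [← hA.eq, ← star_mulVec, hv, star_zero]

end Matrix

theorem stmt11_general (Mi Mj : Matrix (Fin 3) (Fin 3) ℝ)
    (hMi : Mi.PosSemidef) (hMj : Mj.PosSemidef)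
    (x : Fin 3 → ℝ) (hxunit : x ⬝ᵥ x = 1)
    (hkeri : LinearMap.ker Mi.mulVecLin = Submodule.span ℝ {x})
    (hkerj : LinearMap.ker Mj.mulVecLin = Submodule.span ℝ {x})
    (σ : ℝ) (hσ : 0 < σ)
    (y : Fin 3 → ℝ) (hy : 0 < x ⬝ᵥ y)
    (J : Matrix (Fin 3 ⊕ Fin 1) (Fin 3 ⊕ Fin 1) ℝ)
    (hJ : J = Matrix.fromBlocks (σ • (Mi + Mj)) (Matrix.replicateCol (Fin 1) y)
        (Matrix.replicateRow (Fin 1) ((2 : ℝ) • x)) 0) :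
    IsUnit J.det := by
  set A := σ • (Mi + Mj)
  have hker : LinearMap.ker A.mulVecLin = Submodule.span ℝ {x} := by
    rw [ker_mulVecLin_smul_s11 _ hσ.ne', PosSemidef.ker_mulVecLin_add hMi hMj, hkeri, hkerj,
      inf_idem]
  have hAx : A *ᵥ x = 0 := by
    change x ∈ LinearMap.ker A.mulVecLin
    exact hker ▸ Submodule.mem_span_singleton_self x
  have hxA : x ᵥ* A = 0 :=
    ((hMi.add hMj).smul hσ.le).isHermitian.star_vecMul_eq_zero hAx
  rw [hJ, isUnit_iff_ne_zero]
  exact det_fromBlocks_replicateCol_replicateRow_ne_zero hxA hker hy.ne' (by norm_num [hxunit])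

theorem stmt11 (Mi Mj : Matrix (Fin 3) (Fin 3) ℝ)
    (hMi : Mi.PosSemidef) (hMj : Mj.PosSemidef)
    (hMirank : Mi.rank = 2) (hMjrank : Mj.rank = 2)
    (x : Fin 3 → ℝ) (hxunit : x ⬝ᵥ x = 1)
    (hkeri : LinearMap.ker Mi.mulVecLin = Submodule.span ℝ {x})
    (hkerj : LinearMap.ker Mj.mulVecLin = Submodule.span ℝ {x})
    (σ : ℝ) (hσ : 0 < σ)
    (y : Fin 3 → ℝ) (hy : 0 < x ⬝ᵥ y)
    (J : Matrix (Fin 3 ⊕ Fin 1) (Fin 3 ⊕ Fin 1) ℝ)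
    (hJ : J = Matrix.fromBlocks (σ • (Mi + Mj)) (Matrix.replicateCol (Fin 1) y)
        (Matrix.replicateRow (Fin 1) ((2 : ℝ) • x)) 0) :
    IsUnit J.det :=
  stmt11_general Mi Mj hMi hMj x hxunit hkeri hkerj σ hσ y hy J hJ
end

section
/- Let $H \in \mathbb{R}^{n\times n}$ be positive definite, $D$ negative semi-definite, $J_r \in \mathbb{R}^{k\times n}$ have full row rank, and $\Lambda_r \in \mathbb{R}^{k\times k}$ a diagonal matrix with strictly positive diagonal entries. Then the block matrix $\begin{bmatrix} H - D & -J_r^T \\ \Lambda_r J_r & 0 \end{bmatrix}$ is non-singular. -/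
open Matrix
open scoped ComplexOrder

namespace Matrix

variable {m n K : Type*} [Fintype m] [Fintype n]

theorem vecMul_injective_of_rank_eq_card [Field K] {A : Matrix m n K}
    (hA : A.rank = Fintype.card m) : Function.Injective A.vecMul := by
  rw [vecMul_injective_iff, linearIndependent_iff_card_eq_finrank_span, ← hA,
    rank_eq_finrank_span_row, Set.finrank]

/-- The Schur complement of the positive definite block `A` is `L * (B * A⁻¹ * Bᴴ)`, and
`B * A⁻¹ * Bᴴ` is positive definite because `B` has independent rows. -/
theorem isUnit_det_fromBlocks_neg_conjTranspose_zero [DecidableEq m] [DecidableEq n] [RCLike K]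
    {A : Matrix n n K} (hA : A.PosDef) {B : Matrix m n K} (hB : Function.Injective B.vecMul)
    {L : Matrix m m K} (hL : IsUnit L.det) :
    IsUnit (fromBlocks A (-Bᴴ) (L * B) 0).det := by
  let _ := hA.isUnit.invertible
  have hS : (B * A⁻¹ * Bᴴ).PosDef := hA.inv.mul_mul_conjTranspose_same hB
  have hschur : (0 : Matrix m m K) - L * B * ⅟A * -Bᴴ = L * (B * A⁻¹ * Bᴴ) := by
    simp only [invOf_eq_nonsing_inv, Matrix.mul_neg, zero_sub, neg_neg, Matrix.mul_assoc]
  rw [det_fromBlocks₁₁, hschur, det_mul]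
  have hAdet : IsUnit A.det := (isUnit_iff_isUnit_det A).mp hA.isUnit
  have hSdet : IsUnit (B * A⁻¹ * Bᴴ).det := (isUnit_iff_isUnit_det _).mp hS.isUnit
  exact hAdet.mul (hL.mul hSdet)

end Matrix

theorem stmt14 (n k : ℕ) (H D : Matrix (Fin n) (Fin n) ℝ)
    (hH : H.PosDef) (hD : (-D).PosSemidef)
    (Jr : Matrix (Fin k) (Fin n) ℝ) (hJr : Jr.rank = k)
    (Λ : Fin k → ℝ) (hΛ : ∀ i, 0 < Λ i) :
    IsUnit (Matrix.fromBlocks (H - D) (-Jrᵀ) (Matrix.diagonal Λ * Jr)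
      (0 : Matrix (Fin k) (Fin k) ℝ)).det := by
  have hA : (H - D).PosDef := by simpa only [sub_eq_add_neg] using hH.add_posSemidef hD
  have hJ : Function.Injective Jr.vecMul :=
    vecMul_injective_of_rank_eq_card (by rw [hJr, Fintype.card_fin])
  have hΛdet : IsUnit (diagonal Λ).det := by
    rw [det_diagonal, isUnit_iff_ne_zero]
    exact Finset.prod_ne_zero_iff.mpr fun i _ => (hΛ i).ne'
  simpa only [conjTranspose_eq_transpose_of_trivial] using
    isUnit_det_fromBlocks_neg_conjTranspose_zero hA hJ hΛdet
end

section
/- Let $\mathcal{C}_1, \mathcal{C}_2 \subset \mathbb{R}^3$ be compact convex sets with seed points $p_1 \in \mathrm{int}(\mathcal{C}_1)$, $p_2 \in \mathrm{int}(\mathcal{C}_2)$, $p_1 \ne p_2$, and define the grown sets $\mathcal{C}_i(\sigma) = p_i + \sigma(\mathcal{C}_i - p_i)$ for $\sigma \ge 0$. Then the set $\{\sigma \ge 0 : \mathcal{C}_1(\sigma) \cap \mathcal{C}_2(\sigma) \ne \emptyset\}$ is a closed interval of the form $[\sigma^*, \infty)$ for a unique growth factor $\sigma^* \ge 0$. 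-/
theorem stmt18 (C1 C2 : Set (Fin 3 → ℝ))
    (h1c : IsCompact C1) (h2c : IsCompact C2)
    (h1conv : Convex ℝ C1) (h2conv : Convex ℝ C2)
    (p1 p2 : Fin 3 → ℝ) (hp1 : p1 ∈ interior C1) (hp2 : p2 ∈ interior C2)
    (hne : p1 ≠ p2) :
    ∃! s : ℝ, 0 ≤ s ∧
      {σ : ℝ | 0 ≤ σ ∧
        (((fun c => p1 + σ • (c - p1)) '' C1) ∩ ((fun c => p2 + σ • (c - p2)) '' C2)).Nonempty}
        = Set.Ici s := by
  set S : Set ℝ := {σ : ℝ | 0 ≤ σ ∧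
      (((fun c => p1 + σ • (c - p1)) '' C1) ∩ ((fun c => p2 + σ • (c - p2)) '' C2)).Nonempty}
    with hSdef
  have hp1' : p1 ∈ C1 := interior_subset hp1
  have hp2' : p2 ∈ C2 := interior_subset hp2
  -- upward closed
  have hup : ∀ σ σ' : ℝ, σ ∈ S → σ ≤ σ' → σ' ∈ S := by
    rintro σ σ' ⟨hσ0, x, ⟨c1, hc1, he1⟩, ⟨c2, hc2, he2⟩⟩ hle
    rcases eq_or_lt_of_le (hσ0.trans hle) with h0 | h0
    · have : σ = σ' := le_antisymm hle (h0 ▸ hσ0)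
      exact this ▸ ⟨hσ0, x, ⟨c1, hc1, he1⟩, ⟨c2, hc2, he2⟩⟩
    · refine ⟨hσ0.trans hle, x, ?_, ?_⟩
      · set t : ℝ := σ / σ' with ht
        have ht0 : 0 ≤ t := div_nonneg hσ0 h0.le
        have ht1 : t ≤ 1 := div_le_one_of_le₀ hle h0.le
        refine ⟨(1 - t) • p1 + t • c1, h1conv hp1' hc1 (by linarith) ht0 (by ring), ?_⟩
        have hst : σ' * t = σ := by rw [ht]; field_simp
        have he1' : p1 + σ • (c1 - p1) = x := he1
        show p1 + σ' • ((1 - t) • p1 + t • c1 - p1) = x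
        rw [← he1']
        have : ((1 : ℝ) - t) • p1 + t • c1 - p1 = t • (c1 - p1) := by
          module
        rw [this, smul_smul, hst]
      · set t : ℝ := σ / σ' with ht
        have ht0 : 0 ≤ t := div_nonneg hσ0 h0.le
        have ht1 : t ≤ 1 := div_le_one_of_le₀ hle h0.le
        refine ⟨(1 - t) • p2 + t • c2, h2conv hp2' hc2 (by linarith) ht0 (by ring), ?_⟩
        have hst : σ' * t = σ := by rw [ht]; field_simp
        have he2' : p2 + σ • (c2 - p2) = x := he2
        show p2 + σ' • ((1 - t) • p2 + t • c2 - p2) = x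
        rw [← he2']
        have : ((1 : ℝ) - t) • p2 + t • c2 - p2 = t • (c2 - p2) := by
          module
        rw [this, smul_smul, hst]
  -- closed
  have hclosed : IsClosed S := by
    refine IsSeqClosed.isClosed ?_
    intro u σ hu huσ
    have h0 : ∀ n, 0 ≤ u n := fun n => (hu n).1
    choose x hx using fun n => (hu n).2
    choose c1 hc1 he1 using fun n => (hx n).1
    choose c2 hc2 he2 using fun n => (hx n).2
    obtain ⟨a, haC, φ, hφ, ha⟩ := h1c.tendsto_subseq hc1
    obtain ⟨b, hbC, ψ, hψ, hb⟩ := h2c.tendsto_subseq (fun n => hc2 (φ n))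
    have huσ' : Filter.Tendsto (fun n => u (φ (ψ n))) Filter.atTop (nhds σ) :=
      huσ.comp ((hφ.comp hψ).tendsto_atTop)
    have ha' : Filter.Tendsto (fun n => c1 (φ (ψ n))) Filter.atTop (nhds a) :=
      ha.comp hψ.tendsto_atTop
    have hL : Filter.Tendsto (fun n => p1 + u (φ (ψ n)) • (c1 (φ (ψ n)) - p1))
        Filter.atTop (nhds (p1 + σ • (a - p1))) :=
      tendsto_const_nhds.add (huσ'.smul (ha'.sub tendsto_const_nhds))
    have hR : Filter.Tendsto (fun n => p2 + u (φ (ψ n)) • (c2 (φ (ψ n)) - p2))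
        Filter.atTop (nhds (p2 + σ • (b - p2))) :=
      tendsto_const_nhds.add (huσ'.smul (hb.sub tendsto_const_nhds))
    have heq : ∀ n, p1 + u (φ (ψ n)) • (c1 (φ (ψ n)) - p1)
        = p2 + u (φ (ψ n)) • (c2 (φ (ψ n)) - p2) := by
      intro n
      have a1 : p1 + u (φ (ψ n)) • (c1 (φ (ψ n)) - p1) = x (φ (ψ n)) := he1 _
      have a2 : p2 + u (φ (ψ n)) • (c2 (φ (ψ n)) - p2) = x (φ (ψ n)) := he2 _
      rw [a1, a2]
    have hlim : p1 + σ • (a - p1) = p2 + σ • (b - p2) := by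
      refine tendsto_nhds_unique hL ?_
      simpa only [heq] using hR
    refine ⟨ge_of_tendsto' huσ fun n => h0 n, p1 + σ • (a - p1), ⟨a, haC, rfl⟩,
      ⟨b, hbC, hlim.symm⟩⟩
  -- nonempty
  have hSne : S.Nonempty := by
    obtain ⟨ε, hε, hball⟩ := Metric.mem_nhds_iff.mp (mem_interior_iff_mem_nhds.mp hp1)
    set σ₀ : ℝ := ‖p2 - p1‖ / ε + 1 with hσ₀def
    have hσ₀pos : 0 < σ₀ := by positivity
    refine ⟨σ₀, hσ₀pos.le, p2, ⟨p1 + σ₀⁻¹ • (p2 - p1), ?_, ?_⟩, ⟨p2, hp2', by simp⟩⟩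
    · apply hball
      have : dist (p1 + σ₀⁻¹ • (p2 - p1)) p1 = σ₀⁻¹ * ‖p2 - p1‖ := by
        rw [dist_eq_norm]
        have : p1 + σ₀⁻¹ • (p2 - p1) - p1 = σ₀⁻¹ • (p2 - p1) := by module
        rw [this, norm_smul, Real.norm_eq_abs, abs_of_pos (by positivity)]
      rw [Metric.mem_ball, this]
      rw [inv_mul_lt_iff₀ hσ₀pos]
      have h1 : ‖p2 - p1‖ / ε < σ₀ := by simp [hσ₀def]
      rw [div_lt_iff₀ hε] at h1
      linarith
    · simp only
      rw [show p1 + σ₀⁻¹ • (p2 - p1) - p1 = σ₀⁻¹ • (p2 - p1) by module,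
        smul_smul, mul_inv_cancel₀ hσ₀pos.ne', one_smul]
      module
  have hbdd : BddBelow S := ⟨0, fun σ hσ => hσ.1⟩
  have hmem : sInf S ∈ S := hclosed.csInf_mem hSne hbdd
  have hs0 : 0 ≤ sInf S := le_csInf hSne fun σ hσ => hσ.1
  have hEq : S = Set.Ici (sInf S) := by
    apply Set.eq_of_subset_of_subset
    · exact fun σ hσ => csInf_le hbdd hσ
    · exact fun σ hσ => hup _ _ hmem hσ
  refine ⟨sInf S, ⟨hs0, hEq⟩, ?_⟩
  rintro s ⟨hs0', hSs⟩
  have h12 : Set.Ici s = Set.Ici (sInf S) := hSs.symm.trans hEq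
  have hA : s ∈ Set.Ici (sInf S) := by rw [← h12]; exact Set.self_mem_Ici
  have hB : sInf S ∈ Set.Ici s := by rw [h12]; exact Set.self_mem_Ici
  exact le_antisymm hB hA
end
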